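/- Weighted Sobolev estimate (Lemma 2.1, inequality (2.4)): There is a constant C > 0 such that for every T > 0, every smooth function φ on [0,T] × ℝ², every t ∈ [0,T] and every x ∈ ℝ², ⟨|x|⟩^{1/2} |φ(t,x)| ≤ C Σ_{|α| ≤ 2} ‖Γ^α φ(t,·)‖_{L²(ℝ²)}, provided the norms on the right-hand side are finite. -/

import Mathlib

open MeasureTheory

noncomputable section

namespace Paper

/-- Two-dimensional Euclidean space. -/
abbrev Pt2 := EuclideanSpace ℝ (Fin 2)

/-- Time derivative ∂_t. -/
def tD (φ : ℝ → Pt2 → ℝ) : ℝ → Pt2 → ℝ := fun t x => deriv (fun s => φ s x) t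

/-- Spatial derivative ∂_i (i = 1,2). -/
def xD (i : Fin 2) (φ : ℝ → Pt2 → ℝ) : ℝ → Pt2 → ℝ :=
  fun t x => fderiv ℝ (fun y => φ t y) x (EuclideanSpace.single i 1)

/-- First-order space-time derivatives: ∂_0 = ∂_t, ∂_1, ∂_2. -/
def pD : Fin 3 → (ℝ → Pt2 → ℝ) → ℝ → Pt2 → ℝ := ![tD, xD 0, xD 1]

/-- Scaling field S = t∂_t + r∂_r = t∂_t + x·∇. -/
def sD (φ : ℝ → Pt2 → ℝ) : ℝ → Pt2 → ℝ :=
  fun t x => t * tD φ t x + x 0 * xD 0 φ t x + x 1 * xD 1 φ t x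

/-- Rotation field Ω = x₂∂₁ − x₁∂₂. -/
def oD (φ : ℝ → Pt2 → ℝ) : ℝ → Pt2 → ℝ :=
  fun t x => x 1 * xD 0 φ t x - x 0 * xD 1 φ t x

/-- Radial derivative ∂_r = (x/r)·∇. -/
def rD (φ : ℝ → Pt2 → ℝ) : ℝ → Pt2 → ℝ :=
  fun t x => (x 0 * xD 0 φ t x + x 1 * xD 1 φ t x) / ‖x‖

/-- The five admissible vector fields Γ ∈ {∂_t, ∂_1, ∂_2, S, Ω}. -/
inductive VF : Type
  | t | x1 | x2 | s | om
  deriving DecidableEq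

instance : Fintype VF where
  elems := {VF.t, VF.x1, VF.x2, VF.s, VF.om}
  complete := by intro x; cases x <;> decide

/-- Action of a vector field Γ on a function. -/
def VF.apply : VF → (ℝ → Pt2 → ℝ) → ℝ → Pt2 → ℝ
  | .t => tD
  | .x1 => xD 0
  | .x2 => xD 1
  | .s => sD
  | .om => oD

/-- Iterated vector fields Γ^α for a word α. -/
def GammaIter : List VF → (ℝ → Pt2 → ℝ) → ℝ → Pt2 → ℝ
  | [], φ => φ
  | v :: l, φ => v.apply (GammaIter l φ)

/-- Γ^α for a multi-index α of length k. -/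
def GammaW {k : ℕ} (α : Fin k → VF) (φ : ℝ → Pt2 → ℝ) : ℝ → Pt2 → ℝ :=
  GammaIter (List.ofFn α) φ

/-- Japanese bracket ⟨s⟩ = (1 + s²)^{1/2}. -/
def jb (s : ℝ) : ℝ := Real.sqrt (1 + s ^ 2)

/-- Spatial L² norm. -/
def L2 (f : Pt2 → ℝ) : ℝ := Real.sqrt (∫ x : Pt2, (f x) ^ 2)

/-- κ-th order generalized energy E_κ(φ)(t). -/
def Ek (κ : ℕ) (φ : ℝ → Pt2 → ℝ) (t : ℝ) : ℝ :=
  (1/2) * ∑ k ∈ Finset.range κ, ∑ α : Fin k → VF,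
    ∫ x : Pt2, ((tD (GammaW α φ) t x) ^ 2 + (xD 0 (GammaW α φ) t x) ^ 2
      + (xD 1 (GammaW α φ) t x) ^ 2)

/-- The d'Alembertian □φ = ∂_t²φ − Δφ. -/
def waveOp (φ : ℝ → Pt2 → ℝ) : ℝ → Pt2 → ℝ :=
  fun t x => tD (tD φ) t x - (xD 0 (xD 0 φ) t x + xD 1 (xD 1 φ) t x)



section AuxWS24

open Real Set Filter
open scoped ENNReal NNReal

def pt (a b : ℝ) : Pt2 := WithLp.toLp 2 ![a, b]

@[simp] lemma pt_zero (a b : ℝ) : pt a b 0 = a := rfl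
@[simp] lemma pt_one (a b : ℝ) : pt a b 1 = b := rfl

lemma pt_eta (x : Pt2) : pt (x 0) (x 1) = x := by
  ext i; fin_cases i <;> rfl

lemma pt_eq (a b : ℝ) : pt a b = a • (EuclideanSpace.single 0 (1:ℝ)) + b • (EuclideanSpace.single 1 (1:ℝ)) := by
  ext i; fin_cases i <;>
    simp [pt, EuclideanSpace.single_apply, PiLp.add_apply, PiLp.smul_apply]

lemma norm_pt (a b : ℝ) : ‖pt a b‖ = Real.sqrt (a^2 + b^2) := by
  rw [EuclideanSpace.norm_eq]
  simp [Fin.sum_univ_two, sq_abs]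

def dd (i : Fin 2) (h : Pt2 → ℝ) : Pt2 → ℝ := fun y => fderiv ℝ h y (EuclideanSpace.single i 1)

def omg (h : Pt2 → ℝ) : Pt2 → ℝ := fun y => y 1 * dd 0 h y - y 0 * dd 1 h y

lemma contDiff_dd {h : Pt2 → ℝ} (hh : ContDiff ℝ (⊤ : ℕ∞) h) (i : Fin 2) : ContDiff ℝ (⊤ : ℕ∞) (dd i h) :=
  (hh.fderiv_right (by simp)).clm_apply contDiff_const

lemma contDiff_coord (i : Fin 2) : ContDiff ℝ (⊤ : ℕ∞) (fun y : Pt2 => y i) :=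
  (EuclideanSpace.proj i : EuclideanSpace ℝ (Fin 2) →L[ℝ] ℝ).contDiff

lemma contDiff_omg {h : Pt2 → ℝ} (hh : ContDiff ℝ (⊤ : ℕ∞) h) : ContDiff ℝ (⊤ : ℕ∞) (omg h) :=
  ((contDiff_coord 1).mul (contDiff_dd hh 0)).sub ((contDiff_coord 0).mul (contDiff_dd hh 1))

lemma continuous_pt_comp {A B : ℝ → ℝ} (hA : Continuous A) (hB : Continuous B) :
    Continuous (fun s => pt (A s) (B s)) := by
  simp only [pt_eq]
  exact (hA.smul continuous_const).add (hB.smul continuous_const)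

lemma hasDerivAt_comp_pt {h : Pt2 → ℝ} (hh : ContDiff ℝ (⊤ : ℕ∞) h)
    {A B : ℝ → ℝ} {a' b' θ : ℝ} (hA : HasDerivAt A a' θ) (hB : HasDerivAt B b' θ) :
    HasDerivAt (fun τ => h (pt (A τ) (B τ)))
      (a' * dd 0 h (pt (A θ) (B θ)) + b' * dd 1 h (pt (A θ) (B θ))) θ := by
  have hcurve : HasDerivAt (fun τ => pt (A τ) (B τ))
      (a' • (EuclideanSpace.single 0 (1:ℝ)) + b' • (EuclideanSpace.single 1 (1:ℝ))) θ := by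
    simp only [pt_eq]
    exact ((hA.smul_const _).add (hB.smul_const _))
  have hd := ((hh.differentiable (by simp)) (pt (A θ) (B θ))).hasFDerivAt
  have hc := hd.comp_hasDerivAt θ hcurve
  simp only [Function.comp_def, map_add, ContinuousLinearMap.map_smul, smul_eq_mul] at hc
  exact hc


lemma oneD {F F' : ℝ → ℝ} {a L : ℝ} (hL : 0 < L)
    (hd : ∀ s ∈ Icc a (a+L), HasDerivAt F (F' s) s)
    (hF'c : ContinuousOn F' (Icc a (a+L))) :
    |F a| ≤ L⁻¹ * (∫ s in a..(a+L), |F s|) + ∫ s in a..(a+L), |F' s| := by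
  have haL : a ≤ a + L := by linarith
  have hFc : ContinuousOn F (Icc a (a+L)) := fun s hs => ((hd s hs).continuousAt).continuousWithinAt
  have hFi : IntervalIntegrable (fun s => |F s|) volume a (a+L) := by
    apply ContinuousOn.intervalIntegrable
    rw [uIcc_of_le haL]; exact hFc.abs
  have hF'i : IntervalIntegrable (fun s => |F' s|) volume a (a+L) := by
    apply ContinuousOn.intervalIntegrable
    rw [uIcc_of_le haL]; exact hF'c.abs
  set K := ∫ s in a..(a+L), |F' s| with hK
  have hKnn : 0 ≤ K := intervalIntegral.integral_nonneg haL (fun u _ => abs_nonneg _)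
  have key : ∀ s ∈ Icc a (a+L), |F a| ≤ |F s| + K := by
    intro s hs
    have hs1 : a ≤ s := hs.1
    have hftc : ∫ u in a..s, F' u = F s - F a := by
      apply intervalIntegral.integral_eq_sub_of_hasDerivAt
      · intro u hu
        rw [uIcc_of_le hs1] at hu
        exact hd u ⟨hu.1, hu.2.trans hs.2⟩
      · apply ContinuousOn.intervalIntegrable
        rw [uIcc_of_le hs1]
        exact hF'c.mono (Icc_subset_Icc le_rfl hs.2)
    have h1 : |F a| ≤ |F s| + |∫ u in a..s, F' u| := by
      rw [hftc]
      calc |F a| = |F s - (F s - F a)| := by ring_nf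
        _ ≤ |F s| + |F s - F a| := abs_sub _ _
    have h2 : |∫ u in a..s, F' u| ≤ ∫ u in a..s, |F' u| :=
      intervalIntegral.abs_integral_le_integral_abs hs1
    have h3 : ∫ u in a..s, |F' u| ≤ K := by
      rw [hK]
      apply intervalIntegral.integral_mono_interval le_rfl hs1 hs.2
      · filter_upwards with u using abs_nonneg _
      · exact hF'i
    linarith
  have havg : L * |F a| ≤ (∫ s in a..(a+L), |F s|) + L * K := by
    have h4 : ∫ _ in a..(a+L), |F a| ≤ ∫ s in a..(a+L), (|F s| + K) := by
      apply intervalIntegral.integral_mono_on haL intervalIntegrable_const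
        (hFi.add intervalIntegrable_const)
      intro s hs; exact key s hs
    rw [intervalIntegral.integral_const, intervalIntegral.integral_add hFi intervalIntegrable_const,
      intervalIntegral.integral_const] at h4
    simp only [add_sub_cancel_left, smul_eq_mul] at h4
    linarith [h4]
  have hLinv : 0 < L⁻¹ := inv_pos.mpr hL
  have := mul_le_mul_of_nonneg_left havg hLinv.le
  rw [mul_add, ← mul_assoc, ← mul_assoc, inv_mul_cancel₀ hL.ne', one_mul, one_mul] at this
  rw [hK] at this
  linarith

lemma ofReal_intervalIntegral_le {G : ℝ → ℝ} {a b : ℝ} (hab : a ≤ b) :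
    ENNReal.ofReal (∫ s in a..b, G s) ≤ ∫⁻ s in Ioc a b, ENNReal.ofReal |G s| := by
  rw [intervalIntegral.integral_of_le hab]
  calc ENNReal.ofReal (∫ s in Ioc a b, G s) ≤ ‖∫ s in Ioc a b, G s‖ₑ := by
        rw [Real.enorm_eq_ofReal_abs]; exact ENNReal.ofReal_le_ofReal (le_abs_self _)
    _ ≤ ∫⁻ s in Ioc a b, ‖G s‖ₑ := enorm_integral_le_lintegral_enorm _
    _ = _ := by simp_rw [Real.enorm_eq_ofReal_abs]

lemma point_bound {F F' : ℝ → ℝ} {a L : ℝ} (hL : 1 ≤ L)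
    (hd : ∀ s ∈ Icc a (a+L), HasDerivAt F (F' s) s)
    (hF'c : ContinuousOn F' (Icc a (a+L))) :
    ENNReal.ofReal |F a| ≤
      ∫⁻ s in Ioc a (a+L), (ENNReal.ofReal |F s| + ENNReal.ofReal |F' s|) := by
  have h0 : (0:ℝ) < L := lt_of_lt_of_le one_pos hL
  have haL : a ≤ a + L := by linarith
  have h1 := oneD h0 hd hF'c
  have hInn : 0 ≤ ∫ s in a..(a+L), |F s| :=
    intervalIntegral.integral_nonneg haL (fun u _ => abs_nonneg _)
  have hFc : ContinuousOn F (Icc a (a+L)) := fun s hs => ((hd s hs).continuousAt).continuousWithinAt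
  have hOF : ∀ (G : ℝ → ℝ), ENNReal.ofReal (∫ s in a..(a+L), |G s|) ≤
      ∫⁻ s in Ioc a (a+L), ENNReal.ofReal |G s| := by
    intro G
    have := ofReal_intervalIntegral_le (G := fun s => |G s|) haL
    simpa [abs_abs] using this
  calc ENNReal.ofReal |F a|
      ≤ ENNReal.ofReal (L⁻¹ * (∫ s in a..(a+L), |F s|) + ∫ s in a..(a+L), |F' s|) :=
        ENNReal.ofReal_le_ofReal h1
    _ ≤ ENNReal.ofReal (L⁻¹ * (∫ s in a..(a+L), |F s|)) + ENNReal.ofReal (∫ s in a..(a+L), |F' s|) :=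
        ENNReal.ofReal_add_le
    _ ≤ ENNReal.ofReal (∫ s in a..(a+L), |F s|) + ENNReal.ofReal (∫ s in a..(a+L), |F' s|) := by
        gcongr
        calc L⁻¹ * (∫ s in a..(a+L), |F s|) ≤ 1 * (∫ s in a..(a+L), |F s|) := by
              apply mul_le_mul_of_nonneg_right _ hInn
              exact inv_le_one_of_one_le₀ hL
          _ = _ := one_mul _
    _ ≤ (∫⁻ s in Ioc a (a+L), ENNReal.ofReal |F s|) + ∫⁻ s in Ioc a (a+L), ENNReal.ofReal |F' s| := by
        gcongr
        · exact hOF F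
        · exact hOF F'
    _ = _ := by
        rw [← lintegral_add_left']
        exact ((hFc.abs.mono Ioc_subset_Icc_self).aemeasurable measurableSet_Ioc).ennreal_ofReal


def Φmap : ℝ × ℝ → Pt2 := fun p =>
  WithLp.toLp 2 (MeasurableEquiv.finTwoArrow.symm p)

lemma Φmap_mp : MeasurePreserving Φmap volume volume :=
  (PiLp.volume_preserving_toLp (Fin 2)).comp
    ((volume_preserving_finTwoArrow ℝ).symm _)

lemma Φmap_apply (p : ℝ × ℝ) : Φmap p = pt p.1 p.2 := by
  ext i; fin_cases i <;> rfl

lemma glue_rect {H : Pt2 → ℝ≥0∞} (hH : Measurable H) {I J : Set ℝ} :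
    ∫⁻ s in I, ∫⁻ σ in J, H (pt s σ) ≤ ∫⁻ y, H y := by
  have hHm : Measurable (fun p : ℝ × ℝ => H (Φmap p)) := hH.comp Φmap_mp.measurable
  have h1 : ∫⁻ s in I, ∫⁻ σ in J, H (pt s σ) = ∫⁻ p in I ×ˢ J, H (Φmap p) := by
    rw [Measure.volume_eq_prod, ← Measure.prod_restrict, lintegral_prod _ hHm.aemeasurable]
    simp_rw [Φmap_apply]
  rw [h1]
  calc ∫⁻ p in I ×ˢ J, H (Φmap p) ≤ ∫⁻ p, H (Φmap p) := setLIntegral_le_lintegral _ _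
    _ = ∫⁻ y, H y := Φmap_mp.lintegral_comp hH

def pol (θ s : ℝ) : Pt2 := pt (s * Real.cos θ) (s * Real.sin θ)

lemma glue_polar {H : Pt2 → ℝ≥0∞} (hH : Measurable H) {a b : ℝ} (ha : 0 ≤ a) :
    ∫⁻ θ in Ioc (-π) π, ∫⁻ s in Ioc a b, ENNReal.ofReal s * H (pol θ s) ≤ ∫⁻ y, H y := by
  have hsymm : Measurable (polarCoord.symm : ℝ × ℝ → ℝ × ℝ) := by
    have : Continuous (polarCoord.symm : ℝ × ℝ → ℝ × ℝ) :=
      (continuous_fst.mul (Real.continuous_cos.comp continuous_snd)).prodMk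
        (continuous_fst.mul (Real.continuous_sin.comp continuous_snd))
    exact this.measurable
  set G : ℝ × ℝ → ℝ≥0∞ := fun p => ENNReal.ofReal p.1 * H (Φmap (polarCoord.symm p)) with hG
  have hGm : Measurable G :=
    (measurable_fst.ennreal_ofReal).mul ((hH.comp Φmap_mp.measurable).comp hsymm)
  have h1 : ∫⁻ θ in Ioc (-π) π, ∫⁻ s in Ioc a b, ENNReal.ofReal s * H (pol θ s)
      = ∫⁻ p in (Ioc a b) ×ˢ (Ioo (-π) π), G p := by
    rw [show (volume.restrict (Ioc (-π) π)) = volume.restrict (Ioo (-π) π) from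
      (Measure.restrict_congr_set Ioo_ae_eq_Ioc).symm]
    rw [Measure.volume_eq_prod, ← Measure.prod_restrict, lintegral_prod_symm _ hGm.aemeasurable]
    apply lintegral_congr
    intro θ
    apply lintegral_congr
    intro s
    simp [hG, Φmap_apply, pol, polarCoord_symm_apply]
  have h3 : ∫⁻ p in (Ioc a b) ×ˢ (Ioo (-π) π), G p ≤ ∫⁻ p in polarCoord.target, G p := by
    apply lintegral_mono_set
    rw [polarCoord_target]
    apply Set.prod_mono_left
    intro s hs
    exact lt_of_le_of_lt ha hs.1
  set B : ℝ × ℝ → ℝ × ℝ →L[ℝ] ℝ × ℝ := fun p =>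
    LinearMap.toContinuousLinearMap (Matrix.toLin (Module.Basis.finTwoProd ℝ) (Module.Basis.finTwoProd ℝ)
      !![Real.cos p.2, -p.1 * Real.sin p.2; Real.sin p.2, p.1 * Real.cos p.2]) with hB
  have B_det : ∀ p, (B p).det = p.1 := by
    intro p
    conv_rhs => rw [← one_mul p.1, ← cos_sq_add_sin_sq p.2]
    simp only [hB, neg_mul, LinearMap.det_toContinuousLinearMap, LinearMap.det_toLin,
      Matrix.det_fin_two_of, sub_neg_eq_add]
    ring
  have h4 : ∫⁻ p in polarCoord.target, G p = ∫⁻ y in polarCoord.source, H (Φmap y) := by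
    have himg := lintegral_image_eq_lintegral_abs_det_fderiv_mul volume
      polarCoord.open_target.measurableSet
      (fun p _ => (hasFDerivAt_polarCoord_symm p).hasFDerivWithinAt)
      polarCoord.symm.injOn (fun y => H (Φmap y))
    rw [polarCoord.symm_image_target_eq_source] at himg
    rw [himg]
    apply setLIntegral_congr_fun polarCoord.open_target.measurableSet
    intro p hp
    rw [hG]
    beta_reduce
    rw [det_fderivPolarCoordSymm, abs_of_pos]
    rw [polarCoord_target] at hp
    exact hp.1
  rw [h1]
  refine h3.trans ?_
  rw [h4]
  calc ∫⁻ y in polarCoord.source, H (Φmap y) ≤ ∫⁻ y, H (Φmap y) := setLIntegral_le_lintegral _ _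
    _ = ∫⁻ y, H y := Φmap_mp.lintegral_comp hH


lemma lint_CS {g₁ g₂ : Pt2 → ℝ} (h₁ : AEMeasurable g₁ volume) (h₂ : AEMeasurable g₂ volume) :
    ∫⁻ y, ENNReal.ofReal |g₁ y| * ENNReal.ofReal |g₂ y| ≤
      eLpNorm g₁ 2 volume * eLpNorm g₂ 2 volume := by
  have hconj : Real.HolderConjugate 2 2 := Real.HolderConjugate.two_two
  have hH := ENNReal.lintegral_mul_le_Lp_mul_Lq volume hconj
    (f := fun y => ENNReal.ofReal |g₁ y|) (g := fun y => ENNReal.ofReal |g₂ y|)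
    (continuous_abs.measurable.comp_aemeasurable h₁).ennreal_ofReal (continuous_abs.measurable.comp_aemeasurable h₂).ennreal_ofReal
  have e₁ : eLpNorm g₁ 2 volume = (∫⁻ y, ENNReal.ofReal |g₁ y| ^ (2:ℝ)) ^ (1/(2:ℝ)) := by
    rw [eLpNorm_eq_lintegral_rpow_enorm_toReal (by norm_num) (by norm_num)]
    norm_num
    simp_rw [Real.enorm_eq_ofReal_abs]
  have e₂ : eLpNorm g₂ 2 volume = (∫⁻ y, ENNReal.ofReal |g₂ y| ^ (2:ℝ)) ^ (1/(2:ℝ)) := by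
    rw [eLpNorm_eq_lintegral_rpow_enorm_toReal (by norm_num) (by norm_num)]
    norm_num
    simp_rw [Real.enorm_eq_ofReal_abs]
  rw [e₁, e₂]
  exact hH


lemma hasDerivAt_line0 {g : Pt2 → ℝ} (hg : ContDiff ℝ (⊤ : ℕ∞) g) (c s : ℝ) :
    HasDerivAt (fun s => g (pt s c)) (dd 0 g (pt s c)) s := by
  have := hasDerivAt_comp_pt hg (hasDerivAt_id s) (hasDerivAt_const s c)
  simpa using this

lemma hasDerivAt_line1 {g : Pt2 → ℝ} (hg : ContDiff ℝ (⊤ : ℕ∞) g) (c σ : ℝ) :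
    HasDerivAt (fun σ => g (pt c σ)) (dd 1 g (pt c σ)) σ := by
  have := hasDerivAt_comp_pt hg (hasDerivAt_const σ c) (hasDerivAt_id σ)
  simpa using this

lemma cont_line {g : Pt2 → ℝ} (hg : Continuous g) {A B : ℝ → ℝ} (hA : Continuous A)
    (hB : Continuous B) : Continuous (fun s => g (pt (A s) (B s))) :=
  hg.comp (continuous_pt_comp hA hB)

def Hc (f : Pt2 → ℝ) : Pt2 → ℝ := fun y =>
  |f y * f y| + 2*|f y * dd 1 f y| + 2*|f y * dd 0 f y| + 2*|dd 1 f y * dd 0 f y|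
    + 2*|f y * dd 1 (dd 0 f) y|

lemma cart_bound {f : Pt2 → ℝ} (hf : ContDiff ℝ (⊤ : ℕ∞) f) (x : Pt2) :
    ENNReal.ofReal (f x ^ 2) ≤ ∫⁻ y, ENNReal.ofReal (Hc f y) := by
  have hf1 := contDiff_dd hf 0
  have hf2 := contDiff_dd hf 1
  have hf01 := contDiff_dd hf1 1
  have cf := hf.continuous
  have cf1 := hf1.continuous
  have cf2 := hf2.continuous
  have cf01 := hf01.continuous
  set c₁ := x 0 with hc₁
  set c₂ := x 1 with hc₂
  -- step 1 : horizontal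
  set F : ℝ → ℝ := fun s => f (pt s c₂) ^ 2 with hF
  set F' : ℝ → ℝ := fun s => 2 * f (pt s c₂) * dd 0 f (pt s c₂) with hF'
  have hdF : ∀ s ∈ Icc c₁ (c₁+2), HasDerivAt F (F' s) s := by
    intro s _
    have h := (hasDerivAt_line0 hf c₂ s).fun_pow 2
    simpa [hF, hF'] using h
  have hF'c : ContinuousOn F' (Icc c₁ (c₁+2)) :=
    ((continuous_const.mul (cont_line cf continuous_id continuous_const)).mul
      (cont_line cf1 continuous_id continuous_const)).continuousOn
  have step1 : ENNReal.ofReal (f x ^ 2) ≤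
      ∫⁻ s in Ioc c₁ (c₁+2), (ENNReal.ofReal |F s| + ENNReal.ofReal |F' s|) := by
    have h0 : |F c₁| = f x ^ 2 := by
      rw [hF]; simp only [hc₁, hc₂, pt_eta]
      exact abs_of_nonneg (pow_two_nonneg _)
    have := point_bound one_le_two hdF hF'c
    rwa [h0] at this
  -- step 2 : vertical, pointwise in s
  have step2 : ∀ s : ℝ, (ENNReal.ofReal |F s| + ENNReal.ofReal |F' s|) ≤
      ∫⁻ σ in Ioc c₂ (c₂+2), ENNReal.ofReal (Hc f (pt s σ)) := by
    intro s
    set G₁ : ℝ → ℝ := fun σ => f (pt s σ) ^ 2 with hG₁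
    set G₁' : ℝ → ℝ := fun σ => 2 * f (pt s σ) * dd 1 f (pt s σ) with hG₁'
    set G₂ : ℝ → ℝ := fun σ => 2 * f (pt s σ) * dd 0 f (pt s σ) with hG₂
    set G₂' : ℝ → ℝ := fun σ =>
      2 * dd 1 f (pt s σ) * dd 0 f (pt s σ) + 2 * f (pt s σ) * dd 1 (dd 0 f) (pt s σ) with hG₂'
    have hd1 : ∀ σ ∈ Icc c₂ (c₂+2), HasDerivAt G₁ (G₁' σ) σ := by
      intro σ _
      have h := (hasDerivAt_line1 hf s σ).fun_pow 2
      simpa [hG₁, hG₁'] using h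
    have hd2 : ∀ σ ∈ Icc c₂ (c₂+2), HasDerivAt G₂ (G₂' σ) σ := by
      intro σ _
      have h := ((hasDerivAt_line1 hf s σ).const_mul (2:ℝ)).fun_mul (hasDerivAt_line1 hf1 s σ)
      simpa [hG₂, hG₂', mul_assoc] using h
    have cG₁ : Continuous G₁ := (cont_line cf continuous_const continuous_id).pow 2
    have cG₁' : Continuous G₁' :=
      (continuous_const.mul (cont_line cf continuous_const continuous_id)).mul
        (cont_line cf2 continuous_const continuous_id)
    have cG₂ : Continuous G₂ :=
      (continuous_const.mul (cont_line cf continuous_const continuous_id)).mul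
        (cont_line cf1 continuous_const continuous_id)
    have cG₂' : Continuous G₂' :=
      ((continuous_const.mul (cont_line cf2 continuous_const continuous_id)).mul
        (cont_line cf1 continuous_const continuous_id)).add
        ((continuous_const.mul (cont_line cf continuous_const continuous_id)).mul
        (cont_line cf01 continuous_const continuous_id))
    have hc1' : ContinuousOn G₁' (Icc c₂ (c₂+2)) := cG₁'.continuousOn
    have hc2' : ContinuousOn G₂' (Icc c₂ (c₂+2)) := cG₂'.continuousOn
    have hb1 := point_bound one_le_two hd1 hc1'
    have hb2 := point_bound one_le_two hd2 hc2'
    have hid1 : |F s| = |G₁ c₂| := rfl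
    have hid2 : |F' s| = |G₂ c₂| := rfl
    rw [hid1, hid2]
    have hmeas : ∀ (u : ℝ → ℝ), Continuous u → AEMeasurable (fun σ => ENNReal.ofReal |u σ|)
        (volume.restrict (Ioc c₂ (c₂+2))) := by
      intro u hu
      exact (hu.abs.aemeasurable).ennreal_ofReal
    calc ENNReal.ofReal |G₁ c₂| + ENNReal.ofReal |G₂ c₂|
        ≤ (∫⁻ σ in Ioc c₂ (c₂+2), (ENNReal.ofReal |G₁ σ| + ENNReal.ofReal |G₁' σ|)) +
          (∫⁻ σ in Ioc c₂ (c₂+2), (ENNReal.ofReal |G₂ σ| + ENNReal.ofReal |G₂' σ|)) :=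
          add_le_add hb1 hb2
      _ = ∫⁻ σ in Ioc c₂ (c₂+2), ((ENNReal.ofReal |G₁ σ| + ENNReal.ofReal |G₁' σ|) +
            (ENNReal.ofReal |G₂ σ| + ENNReal.ofReal |G₂' σ|)) := by
          rw [← lintegral_add_left' ((hmeas G₁ cG₁).fun_add (hmeas G₁' cG₁'))]
      _ ≤ ∫⁻ σ in Ioc c₂ (c₂+2), ENNReal.ofReal (Hc f (pt s σ)) := by
          apply lintegral_mono
          intro σ
          set y := pt s σ
          have hreal : |G₁ σ| + |G₁' σ| + (|G₂ σ| + |G₂' σ|) ≤ Hc f y := by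
            have e1 : |G₁ σ| = |f y * f y| := by simp only [hG₁, pow_two]; rfl
            have habs : ∀ u v : ℝ, |2 * u * v| = 2 * |u * v| := by
              intro u v; rw [mul_assoc, abs_mul]; norm_num
            have e2 : |G₁' σ| = 2 * |f y * dd 1 f y| := habs _ _
            have e3 : |G₂ σ| = 2 * |f y * dd 0 f y| := habs _ _
            have e4 : |G₂' σ| ≤ 2 * |dd 1 f y * dd 0 f y| + 2 * |f y * dd 1 (dd 0 f) y| := by
              show |2 * dd 1 f y * dd 0 f y + 2 * f y * dd 1 (dd 0 f) y| ≤ _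
              refine (abs_add_le _ _).trans ?_
              rw [habs, habs]
            rw [Hc, e1, e2, e3]
            linarith
          calc ENNReal.ofReal |G₁ σ| + ENNReal.ofReal |G₁' σ| +
                (ENNReal.ofReal |G₂ σ| + ENNReal.ofReal |G₂' σ|)
              = ENNReal.ofReal (|G₁ σ| + |G₁' σ| + (|G₂ σ| + |G₂' σ|)) := by
                rw [← ENNReal.ofReal_add (abs_nonneg _) (abs_nonneg _),
                  ← ENNReal.ofReal_add (abs_nonneg _) (abs_nonneg _),
                  ← ENNReal.ofReal_add (by positivity) (by positivity)]
            _ ≤ ENNReal.ofReal (Hc f y) := ENNReal.ofReal_le_ofReal hreal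
  -- combine
  have hHcont : Continuous (Hc f) :=
    (((((cf.mul cf).abs.add (continuous_const.mul (cf.mul cf2).abs)).add
      (continuous_const.mul (cf.mul cf1).abs)).add
      (continuous_const.mul (cf2.mul cf1).abs)).add
      (continuous_const.mul (cf.mul cf01).abs))
  calc ENNReal.ofReal (f x ^ 2)
      ≤ ∫⁻ s in Ioc c₁ (c₁+2), (ENNReal.ofReal |F s| + ENNReal.ofReal |F' s|) := step1
    _ ≤ ∫⁻ s in Ioc c₁ (c₁+2), ∫⁻ σ in Ioc c₂ (c₂+2), ENNReal.ofReal (Hc f (pt s σ)) :=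
        lintegral_mono (fun s => step2 s)
    _ ≤ ∫⁻ y, ENNReal.ofReal (Hc f y) := glue_rect (hHcont.measurable.ennreal_ofReal)


lemma cont_pol (θ : ℝ) : Continuous (fun s => pol θ s) :=
  continuous_pt_comp (continuous_id.mul continuous_const) (continuous_id.mul continuous_const)

lemma cont_polθ (r : ℝ) : Continuous (fun ϑ => pol ϑ r) :=
  continuous_pt_comp (continuous_const.mul Real.continuous_cos)
    (continuous_const.mul Real.continuous_sin)

lemma pol_periodic (s : ℝ) : ∀ θ, pol (θ + 2*π) s = pol θ s := by
  intro θ; unfold pol; rw [Real.cos_add_two_pi, Real.sin_add_two_pi]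

def Bprod (g h : Pt2 → ℝ) : Pt2 → ℝ := fun y =>
  2 * |g y * h y| + (|dd 0 g y| + |dd 1 g y|) * |h y| + |g y| * (|dd 0 h y| + |dd 1 h y|)

lemma Bprod_nonneg (g h : Pt2 → ℝ) (y : Pt2) : 0 ≤ Bprod g h y := by
  unfold Bprod; positivity

lemma cont_Bprod {g h : Pt2 → ℝ} (hg : ContDiff ℝ (⊤ : ℕ∞) g) (hh : ContDiff ℝ (⊤ : ℕ∞) h) :
    Continuous (Bprod g h) := by
  unfold Bprod
  have cg := hg.continuous; have ch := hh.continuous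
  have cg0 := (contDiff_dd hg 0).continuous; have cg1 := (contDiff_dd hg 1).continuous
  have ch0 := (contDiff_dd hh 0).continuous; have ch1 := (contDiff_dd hh 1).continuous
  exact ((continuous_const.mul (cg.mul ch).abs).add
    ((cg0.abs.add cg1.abs).mul ch.abs)).add (cg.abs.mul (ch0.abs.add ch1.abs))

lemma hasDerivAt_ray {g : Pt2 → ℝ} (hg : ContDiff ℝ (⊤ : ℕ∞) g) (θ s : ℝ) :
    HasDerivAt (fun s => g (pol θ s))
      (Real.cos θ * dd 0 g (pol θ s) + Real.sin θ * dd 1 g (pol θ s)) s :=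
  hasDerivAt_comp_pt hg (hasDerivAt_mul_const (Real.cos θ)) (hasDerivAt_mul_const (Real.sin θ))

lemma rad_bound {g h : Pt2 → ℝ} (hg : ContDiff ℝ (⊤ : ℕ∞) g) (hh : ContDiff ℝ (⊤ : ℕ∞) h)
    {r θ : ℝ} (hr : 1 ≤ r) :
    ENNReal.ofReal (r * |g (pol θ r) * h (pol θ r)|) ≤
      ∫⁻ s in Ioc r (r + r), ENNReal.ofReal s * ENNReal.ofReal (Bprod g h (pol θ s)) := by
  have hr0 : (0:ℝ) < r := lt_of_lt_of_le one_pos hr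
  set Dg : ℝ → ℝ := fun s => Real.cos θ * dd 0 g (pol θ s) + Real.sin θ * dd 1 g (pol θ s) with hDg
  set Dh : ℝ → ℝ := fun s => Real.cos θ * dd 0 h (pol θ s) + Real.sin θ * dd 1 h (pol θ s) with hDh
  set F : ℝ → ℝ := fun s => s * (g (pol θ s) * h (pol θ s)) with hF
  set F' : ℝ → ℝ := fun s =>
    1 * (g (pol θ s) * h (pol θ s)) + s * (Dg s * h (pol θ s) + g (pol θ s) * Dh s) with hF'
  have hd : ∀ s ∈ Icc r (r+r), HasDerivAt F (F' s) s := fun s _ =>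
    (hasDerivAt_id s).mul ((hasDerivAt_ray hg θ s).mul (hasDerivAt_ray hh θ s))
  have cg := hg.continuous; have ch := hh.continuous
  have cg0 := (contDiff_dd hg 0).continuous; have cg1 := (contDiff_dd hg 1).continuous
  have ch0 := (contDiff_dd hh 0).continuous; have ch1 := (contDiff_dd hh 1).continuous
  have cDg : Continuous Dg := (continuous_const.mul (cg0.comp (cont_pol θ))).add
    (continuous_const.mul (cg1.comp (cont_pol θ)))
  have cDh : Continuous Dh := (continuous_const.mul (ch0.comp (cont_pol θ))).add
    (continuous_const.mul (ch1.comp (cont_pol θ)))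
  have hF'c : ContinuousOn F' (Icc r (r+r)) := by
    apply Continuous.continuousOn
    exact (continuous_const.mul ((cg.comp (cont_pol θ)).mul (ch.comp (cont_pol θ)))).add
      (continuous_id.mul ((cDg.mul (ch.comp (cont_pol θ))).add
        ((cg.comp (cont_pol θ)).mul cDh)))
  have hpb := point_bound hr hd hF'c
  have hlhs : |F r| = r * |g (pol θ r) * h (pol θ r)| := by
    show |r * (g (pol θ r) * h (pol θ r))| = _
    rw [abs_mul, abs_of_nonneg hr0.le]
  rw [hlhs] at hpb
  refine hpb.trans ?_
  apply setLIntegral_mono ((measurable_id.ennreal_ofReal).mul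
    (((cont_Bprod hg hh).comp (cont_pol θ)).measurable.ennreal_ofReal))
  intro s hs
  have hs1 : (1:ℝ) ≤ s := hr.trans hs.1.le
  have hs0 : (0:ℝ) ≤ s := le_trans zero_le_one hs1
  set y := pol θ s with hy
  have hDgb : |Dg s| ≤ |dd 0 g y| + |dd 1 g y| := by
    refine (abs_add_le _ _).trans ?_
    rw [abs_mul, abs_mul]
    calc |Real.cos θ| * |dd 0 g y| + |Real.sin θ| * |dd 1 g y|
        ≤ 1 * |dd 0 g y| + 1 * |dd 1 g y| := by
          gcongr
          · exact Real.abs_cos_le_one θ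
          · exact Real.abs_sin_le_one θ
      _ = |dd 0 g y| + |dd 1 g y| := by ring
  have hDhb : |Dh s| ≤ |dd 0 h y| + |dd 1 h y| := by
    refine (abs_add_le _ _).trans ?_
    rw [abs_mul, abs_mul]
    calc |Real.cos θ| * |dd 0 h y| + |Real.sin θ| * |dd 1 h y|
        ≤ 1 * |dd 0 h y| + 1 * |dd 1 h y| := by
          gcongr
          · exact Real.abs_cos_le_one θ
          · exact Real.abs_sin_le_one θ
      _ = |dd 0 h y| + |dd 1 h y| := by ring
  have h1 : |F s| = s * |g y * h y| := by
    show |s * (g y * h y)| = _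
    rw [abs_mul, abs_of_nonneg hs0]
  have h2 : |F' s| ≤ |g y * h y| +
      s * ((|dd 0 g y| + |dd 1 g y|) * |h y| + |g y| * (|dd 0 h y| + |dd 1 h y|)) := by
    show |1 * (g y * h y) + s * (Dg s * h y + g y * Dh s)| ≤ _
    rw [one_mul]
    refine (abs_add_le _ _).trans ?_
    gcongr
    rw [abs_mul, abs_of_nonneg hs0]
    gcongr
    refine (abs_add_le _ _).trans ?_
    rw [abs_mul, abs_mul]
    gcongr
  have hreal : |F s| + |F' s| ≤ s * Bprod g h y := by
    have hgh : |g y * h y| ≤ s * |g y * h y| := le_mul_of_one_le_left (abs_nonneg _) hs1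
    have hBex : s * Bprod g h y = 2 * (s * |g y * h y|) + s * ((|dd 0 g y| + |dd 1 g y|) * |h y|)
        + s * (|g y| * (|dd 0 h y| + |dd 1 h y|)) := by
      show s * (2 * |g y * h y| + (|dd 0 g y| + |dd 1 g y|) * |h y|
        + |g y| * (|dd 0 h y| + |dd 1 h y|)) = _
      ring
    rw [hBex]
    have := h2
    nlinarith [abs_nonneg (g y * h y), mul_le_mul_of_nonneg_left h2 hs0]
  calc ENNReal.ofReal |F s| + ENNReal.ofReal |F' s|
      = ENNReal.ofReal (|F s| + |F' s|) :=
        (ENNReal.ofReal_add (abs_nonneg _) (abs_nonneg _)).symm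
    _ ≤ ENNReal.ofReal (s * Bprod g h y) := ENNReal.ofReal_le_ofReal hreal
    _ = ENNReal.ofReal s * ENNReal.ofReal (Bprod g h y) := ENNReal.ofReal_mul hs0


def Hp (f : Pt2 → ℝ) : Pt2 → ℝ := fun y => Bprod f f y + 2 * Bprod f (omg f) y

lemma Hp_nonneg (f : Pt2 → ℝ) (y : Pt2) : 0 ≤ Hp f y := by
  have := Bprod_nonneg f f y; have := Bprod_nonneg f (omg f) y
  unfold Hp; linarith

lemma cont_Hp {f : Pt2 → ℝ} (hf : ContDiff ℝ (⊤ : ℕ∞) f) : Continuous (Hp f) :=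
  (cont_Bprod hf hf).add (continuous_const.mul (cont_Bprod hf (contDiff_omg hf)))

lemma exists_theta {x : Pt2} (hx : 1 ≤ ‖x‖) : ∃ θ, pol θ ‖x‖ = x := by
  set z : ℂ := Complex.mk (x 0) (x 1) with hz
  have habs : ‖z‖ = ‖x‖ := by
    rw [Complex.norm_def, Complex.normSq_mk, ← pt_eta x, norm_pt]
    simp only [pt_zero, pt_one]
    ring_nf
  have hz0 : z ≠ 0 := by
    intro h
    rw [h] at habs
    simp at habs
    rw [← habs] at hx
    norm_num at hx
  refine ⟨z.arg, ?_⟩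
  have hid := Complex.norm_mul_cos_add_sin_mul_I z
  rw [habs] at hid
  have hre : ‖x‖ * Real.cos z.arg = x 0 := by
    have := congrArg Complex.re hid
    simpa [hz, Complex.cos_ofReal_re, Complex.sin_ofReal_re] using this
  have him : ‖x‖ * Real.sin z.arg = x 1 := by
    have := congrArg Complex.im hid
    simpa [hz, Complex.cos_ofReal_re, Complex.sin_ofReal_re] using this
  show pt (‖x‖ * Real.cos z.arg) (‖x‖ * Real.sin z.arg) = x
  rw [hre, him]
  exact pt_eta x

lemma polar_bound {f : Pt2 → ℝ} (hf : ContDiff ℝ (⊤ : ℕ∞) f) (x : Pt2) (hx : 1 ≤ ‖x‖) :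
    ENNReal.ofReal (‖x‖ * f x ^ 2) ≤ ∫⁻ y, ENNReal.ofReal (Hp f y) := by
  have hw : ContDiff ℝ (⊤ : ℕ∞) (omg f) := contDiff_omg hf
  have cf := hf.continuous
  have cw := hw.continuous
  set r := ‖x‖ with hrdef
  have hr0 : (0:ℝ) < r := lt_of_lt_of_le one_pos hx
  obtain ⟨θ₀, hθ₀⟩ := exists_theta hx
  -- angular step
  set F : ℝ → ℝ := fun ϑ => f (pol ϑ r) ^ 2 with hF
  set F' : ℝ → ℝ := fun ϑ => 2 * f (pol ϑ r) *
    ((r * -Real.sin ϑ) * dd 0 f (pol ϑ r) + (r * Real.cos ϑ) * dd 1 f (pol ϑ r)) with hF'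
  have hdF : ∀ ϑ ∈ Icc θ₀ (θ₀ + 2*π), HasDerivAt F (F' ϑ) ϑ := by
    intro ϑ _
    have hc : HasDerivAt (fun ϑ => r * Real.cos ϑ) (r * -Real.sin ϑ) ϑ :=
      (Real.hasDerivAt_cos ϑ).const_mul r
    have hs : HasDerivAt (fun ϑ => r * Real.sin ϑ) (r * Real.cos ϑ) ϑ :=
      (Real.hasDerivAt_sin ϑ).const_mul r
    have h := (hasDerivAt_comp_pt hf hc hs).fun_pow 2
    simpa [hF, hF', pol, mul_comm, mul_assoc, mul_left_comm] using h
  have hF'c : ContinuousOn F' (Icc θ₀ (θ₀ + 2*π)) := by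
    apply Continuous.continuousOn
    apply (continuous_const.mul (cf.comp (cont_polθ r))).mul
    exact (((continuous_const.mul Real.continuous_sin.neg).mul
      ((contDiff_dd hf 0).continuous.comp (cont_polθ r))).add
      ((continuous_const.mul Real.continuous_cos).mul
      ((contDiff_dd hf 1).continuous.comp (cont_polθ r))))
  have h2pi : (0:ℝ) < 2*π := by positivity
  have honeD := oneD h2pi hdF hF'c
  -- clean integrands
  set G₁ : ℝ → ℝ := fun ϑ => f (pol ϑ r) ^ 2 with hG₁
  set G₂ : ℝ → ℝ := fun ϑ => 2 * |f (pol ϑ r) * omg f (pol ϑ r)| with hG₂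
  have hFG₁ : ∀ ϑ, |F ϑ| = G₁ ϑ := fun ϑ => abs_of_nonneg (pow_two_nonneg _)
  have hFG₂ : ∀ ϑ, |F' ϑ| = G₂ ϑ := by
    intro ϑ
    have hy0 : (pol ϑ r) 0 = r * Real.cos ϑ := rfl
    have hy1 : (pol ϑ r) 1 = r * Real.sin ϑ := rfl
    have homg : (r * -Real.sin ϑ) * dd 0 f (pol ϑ r) + (r * Real.cos ϑ) * dd 1 f (pol ϑ r)
        = -(omg f (pol ϑ r)) := by
      rw [omg]
      rw [hy0, hy1]
      ring
    show |2 * f (pol ϑ r) * ((r * -Real.sin ϑ) * dd 0 f (pol ϑ r)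
      + (r * Real.cos ϑ) * dd 1 f (pol ϑ r))| = 2 * |f (pol ϑ r) * omg f (pol ϑ r)|
    rw [homg]
    rw [show 2 * f (pol ϑ r) * -(omg f (pol ϑ r)) = -(2 * (f (pol ϑ r) * omg f (pol ϑ r))) by ring]
    rw [abs_neg, abs_mul]
    norm_num
  have hIF : ∫ ϑ in θ₀..(θ₀ + 2*π), |F ϑ| = ∫ ϑ in θ₀..(θ₀ + 2*π), G₁ ϑ :=
    intervalIntegral.integral_congr (fun ϑ _ => hFG₁ ϑ)
  have hIF' : ∫ ϑ in θ₀..(θ₀ + 2*π), |F' ϑ| = ∫ ϑ in θ₀..(θ₀ + 2*π), G₂ ϑ :=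
    intervalIntegral.integral_congr (fun ϑ _ => hFG₂ ϑ)
  -- periodic shift
  have hper₁ : Function.Periodic G₁ (2*π) := by
    intro ϑ; simp only [hG₁, pol_periodic]
  have hper₂ : Function.Periodic G₂ (2*π) := by
    intro ϑ; simp only [hG₂, pol_periodic]
  have hshift₁ : ∫ ϑ in θ₀..(θ₀ + 2*π), G₁ ϑ = ∫ ϑ in (-π)..π, G₁ ϑ := by
    have := hper₁.intervalIntegral_add_eq θ₀ (-π)
    rwa [show -π + 2*π = π by ring] at this
  have hshift₂ : ∫ ϑ in θ₀..(θ₀ + 2*π), G₂ ϑ = ∫ ϑ in (-π)..π, G₂ ϑ := by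
    have := hper₂.intervalIntegral_add_eq θ₀ (-π)
    rwa [show -π + 2*π = π by ring] at this
  have hFθ₀ : |F θ₀| = f x ^ 2 := by
    rw [hFG₁ θ₀]; show f (pol θ₀ r) ^ 2 = f x ^ 2; rw [hθ₀]
  rw [hFθ₀, hIF, hIF', hshift₁, hshift₂] at honeD
  -- real inequality with weight r
  set I₁ := ∫ ϑ in (-π)..π, G₁ ϑ with hI₁
  set I₂ := ∫ ϑ in (-π)..π, G₂ ϑ with hI₂
  have hI₁nn : 0 ≤ I₁ := intervalIntegral.integral_nonneg (by linarith [Real.pi_pos])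
    (fun ϑ _ => pow_two_nonneg _)
  have hI₂nn : 0 ≤ I₂ := intervalIntegral.integral_nonneg (by linarith [Real.pi_pos])
    (fun ϑ _ => by positivity)
  have hrweight : r * f x ^ 2 ≤ r * I₁ + r * I₂ := by
    have hinv : (2*π)⁻¹ * I₁ ≤ I₁ := by
      apply mul_le_of_le_one_left hI₁nn
      rw [inv_le_one_iff₀]
      right; linarith [Real.pi_gt_three]
    have := mul_le_mul_of_nonneg_left honeD hr0.le
    nlinarith [this, mul_le_mul_of_nonneg_left hinv hr0.le]
  -- pass to lintegrals
  have hrI₁ : r * I₁ = ∫ ϑ in (-π)..π, r * G₁ ϑ := by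
    rw [hI₁, ← intervalIntegral.integral_const_mul]
  have hrI₂ : r * I₂ = ∫ ϑ in (-π)..π, r * G₂ ϑ := by
    rw [hI₂, ← intervalIntegral.integral_const_mul]
  have hππ : -π ≤ π := by linarith [Real.pi_pos]
  have step1 : ENNReal.ofReal (r * f x ^ 2) ≤
      ∫⁻ ϑ in Ioc (-π) π, (ENNReal.ofReal |r * G₁ ϑ| + ENNReal.ofReal |r * G₂ ϑ|) := by
    calc ENNReal.ofReal (r * f x ^ 2) ≤ ENNReal.ofReal (r * I₁ + r * I₂) :=
          ENNReal.ofReal_le_ofReal hrweight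
      _ ≤ ENNReal.ofReal (r * I₁) + ENNReal.ofReal (r * I₂) := ENNReal.ofReal_add_le
      _ ≤ (∫⁻ ϑ in Ioc (-π) π, ENNReal.ofReal |r * G₁ ϑ|) +
            ∫⁻ ϑ in Ioc (-π) π, ENNReal.ofReal |r * G₂ ϑ| := by
          gcongr
          · rw [hrI₁]; exact ofReal_intervalIntegral_le hππ
          · rw [hrI₂]; exact ofReal_intervalIntegral_le hππ
      _ = _ := by
          rw [← lintegral_add_left']
          apply AEMeasurable.ennreal_ofReal
          apply Continuous.aemeasurable
          exact (continuous_const.mul ((cf.comp (cont_polθ r)).pow 2)).abs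
  -- pointwise in ϑ : radial bound
  have step2 : ∀ ϑ : ℝ, (ENNReal.ofReal |r * G₁ ϑ| + ENNReal.ofReal |r * G₂ ϑ|) ≤
      ∫⁻ s in Ioc r (r + r), ENNReal.ofReal s * ENNReal.ofReal (Hp f (pol ϑ s)) := by
    intro ϑ
    have hA := rad_bound hf hf hx (θ := ϑ)
    have hB := rad_bound hf hw hx (θ := ϑ)
    have he₁ : |r * G₁ ϑ| = r * |f (pol ϑ r) * f (pol ϑ r)| := by
      rw [abs_mul, abs_of_nonneg hr0.le]
      congr 1
      show |f (pol ϑ r) ^ 2| = |f (pol ϑ r) * f (pol ϑ r)|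
      rw [pow_two]
    have he₂ : |r * G₂ ϑ| = 2 * (r * |f (pol ϑ r) * omg f (pol ϑ r)|) := by
      have hG₂v : G₂ ϑ = 2 * |f (pol ϑ r) * omg f (pol ϑ r)| := rfl
      rw [abs_mul, abs_of_nonneg hr0.le, hG₂v,
        abs_of_nonneg (by positivity : (0:ℝ) ≤ 2 * |f (pol ϑ r) * omg f (pol ϑ r)|)]
      ring
    rw [he₁, he₂]
    have h2B : ENNReal.ofReal (2 * (r * |f (pol ϑ r) * omg f (pol ϑ r)|)) =
        2 * ENNReal.ofReal (r * |f (pol ϑ r) * omg f (pol ϑ r)|) := by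
      rw [ENNReal.ofReal_mul (by norm_num : (0:ℝ) ≤ 2)]
      norm_num
    rw [h2B]
    have meas₁ : AEMeasurable (fun s => ENNReal.ofReal s * ENNReal.ofReal (Bprod f f (pol ϑ s)))
        (volume.restrict (Ioc r (r+r))) :=
      ((measurable_id.ennreal_ofReal).mul
        (((cont_Bprod hf hf).comp (cont_pol ϑ)).measurable.ennreal_ofReal)).aemeasurable
    calc ENNReal.ofReal (r * |f (pol ϑ r) * f (pol ϑ r)|) +
          2 * ENNReal.ofReal (r * |f (pol ϑ r) * omg f (pol ϑ r)|)
        ≤ (∫⁻ s in Ioc r (r+r), ENNReal.ofReal s * ENNReal.ofReal (Bprod f f (pol ϑ s))) +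
          2 * ∫⁻ s in Ioc r (r+r), ENNReal.ofReal s * ENNReal.ofReal (Bprod f (omg f) (pol ϑ s)) := by
          exact add_le_add (rad_bound hf hf hx) (mul_le_mul_right (rad_bound hf hw hx) 2)
      _ = ∫⁻ s in Ioc r (r+r), (ENNReal.ofReal s * ENNReal.ofReal (Bprod f f (pol ϑ s)) +
            2 * (ENNReal.ofReal s * ENNReal.ofReal (Bprod f (omg f) (pol ϑ s)))) := by
          rw [← lintegral_const_mul' 2 _ (by norm_num), ← lintegral_add_left' meas₁]
      _ = ∫⁻ s in Ioc r (r+r), ENNReal.ofReal s * ENNReal.ofReal (Hp f (pol ϑ s)) := by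
          apply lintegral_congr
          intro s
          rw [show Hp f (pol ϑ s) = Bprod f f (pol ϑ s) + 2 * Bprod f (omg f) (pol ϑ s) from rfl,
            ENNReal.ofReal_add (Bprod_nonneg _ _ _) (mul_nonneg (by norm_num) (Bprod_nonneg _ _ _)),
            ENNReal.ofReal_mul (by norm_num : (0:ℝ) ≤ 2), ENNReal.ofReal_ofNat]
          ring
  calc ENNReal.ofReal (r * f x ^ 2)
      ≤ ∫⁻ ϑ in Ioc (-π) π, (ENNReal.ofReal |r * G₁ ϑ| + ENNReal.ofReal |r * G₂ ϑ|) := step1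
    _ ≤ ∫⁻ ϑ in Ioc (-π) π, ∫⁻ s in Ioc r (r+r),
          ENNReal.ofReal s * ENNReal.ofReal (Hp f (pol ϑ s)) :=
        lintegral_mono (fun ϑ => step2 ϑ)
    _ ≤ ∫⁻ y, ENNReal.ofReal (Hp f y) :=
        glue_polar ((cont_Hp hf).measurable.ennreal_ofReal) hr0.le


lemma h2t (t : ℝ) : ENNReal.ofReal (2 * t) = 2 * ENNReal.ofReal t := by
  rw [ENNReal.ofReal_mul (by norm_num : (0:ℝ) ≤ 2), ENNReal.ofReal_ofNat]

lemma lint_pair {u v : Pt2 → ℝ} (hu : Continuous u) (hv : Continuous v) {S : ℝ≥0∞}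
    (h1 : eLpNorm u 2 volume ≤ S) (h2 : eLpNorm v 2 volume ≤ S) :
    ∫⁻ y, ENNReal.ofReal (|u y| * |v y|) ≤ S * S := by
  have he : ∀ y, ENNReal.ofReal (|u y| * |v y|) = ENNReal.ofReal |u y| * ENNReal.ofReal |v y| :=
    fun y => ENNReal.ofReal_mul (abs_nonneg _)
  rw [lintegral_congr he]
  exact (lint_CS hu.aemeasurable hv.aemeasurable).trans (mul_le_mul' h1 h2)

lemma lint_Hc {f : Pt2 → ℝ} (hf : ContDiff ℝ (⊤ : ℕ∞) f) {S : ℝ≥0∞}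
    (n0 : eLpNorm f 2 volume ≤ S)
    (n1 : eLpNorm (dd 0 f) 2 volume ≤ S) (n2 : eLpNorm (dd 1 f) 2 volume ≤ S)
    (n21 : eLpNorm (dd 1 (dd 0 f)) 2 volume ≤ S) :
    ∫⁻ y, ENNReal.ofReal (Hc f y) ≤ 9 * (S * S) := by
  have cf := hf.continuous
  have cf1 := (contDiff_dd hf 0).continuous
  have cf2 := (contDiff_dd hf 1).continuous
  have cf21 := (contDiff_dd (contDiff_dd hf 0) 1).continuous
  set A : Pt2 → ℝ≥0∞ := fun y => ENNReal.ofReal (|f y| * |f y|) with hA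
  set B : Pt2 → ℝ≥0∞ := fun y => ENNReal.ofReal (|f y| * |dd 1 f y|) with hB
  set C : Pt2 → ℝ≥0∞ := fun y => ENNReal.ofReal (|f y| * |dd 0 f y|) with hC
  set D : Pt2 → ℝ≥0∞ := fun y => ENNReal.ofReal (|dd 1 f y| * |dd 0 f y|) with hD
  set E : Pt2 → ℝ≥0∞ := fun y => ENNReal.ofReal (|f y| * |dd 1 (dd 0 f) y|) with hE
  have mOf : ∀ (u v : Pt2 → ℝ), Continuous u → Continuous v →
      Measurable (fun y => ENNReal.ofReal (|u y| * |v y|)) := by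
    intro u v hu hv
    exact ((hu.abs.mul hv.abs).measurable).ennreal_ofReal
  have mA := mOf f f cf cf; have mB := mOf _ _ cf cf2; have mC := mOf _ _ cf cf1
  have mD := mOf _ _ cf2 cf1; have mE := mOf _ _ cf cf21
  have hpt : ∀ y, ENNReal.ofReal (Hc f y) ≤ A y + 2 * B y + 2 * C y + 2 * D y + 2 * E y := by
    intro y
    show ENNReal.ofReal (|f y * f y| + 2*|f y * dd 1 f y| + 2*|f y * dd 0 f y|
      + 2*|dd 1 f y * dd 0 f y| + 2*|f y * dd 1 (dd 0 f) y|) ≤ _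
    rw [abs_mul, abs_mul, abs_mul, abs_mul, abs_mul]
    calc ENNReal.ofReal (|f y| * |f y| + 2*(|f y| * |dd 1 f y|) + 2*(|f y| * |dd 0 f y|)
          + 2*(|dd 1 f y| * |dd 0 f y|) + 2*(|f y| * |dd 1 (dd 0 f) y|))
        ≤ ENNReal.ofReal (|f y| * |f y| + 2*(|f y| * |dd 1 f y|) + 2*(|f y| * |dd 0 f y|)
          + 2*(|dd 1 f y| * |dd 0 f y|)) + ENNReal.ofReal (2*(|f y| * |dd 1 (dd 0 f) y|)) :=
          ENNReal.ofReal_add_le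
      _ ≤ (ENNReal.ofReal (|f y| * |f y| + 2*(|f y| * |dd 1 f y|) + 2*(|f y| * |dd 0 f y|))
            + ENNReal.ofReal (2*(|dd 1 f y| * |dd 0 f y|)))
            + ENNReal.ofReal (2*(|f y| * |dd 1 (dd 0 f) y|)) := by
          gcongr; exact ENNReal.ofReal_add_le
      _ ≤ ((ENNReal.ofReal (|f y| * |f y| + 2*(|f y| * |dd 1 f y|))
            + ENNReal.ofReal (2*(|f y| * |dd 0 f y|)))
            + ENNReal.ofReal (2*(|dd 1 f y| * |dd 0 f y|)))
            + ENNReal.ofReal (2*(|f y| * |dd 1 (dd 0 f) y|)) := by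
          gcongr; exact ENNReal.ofReal_add_le
      _ ≤ (((ENNReal.ofReal (|f y| * |f y|) + ENNReal.ofReal (2*(|f y| * |dd 1 f y|)))
            + ENNReal.ofReal (2*(|f y| * |dd 0 f y|)))
            + ENNReal.ofReal (2*(|dd 1 f y| * |dd 0 f y|)))
            + ENNReal.ofReal (2*(|f y| * |dd 1 (dd 0 f) y|)) := by
          gcongr; exact ENNReal.ofReal_add_le
      _ = A y + 2 * B y + 2 * C y + 2 * D y + 2 * E y := by
          rw [h2t, h2t, h2t, h2t]
  calc ∫⁻ y, ENNReal.ofReal (Hc f y)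
      ≤ ∫⁻ y, (A y + 2 * B y + 2 * C y + 2 * D y + 2 * E y) := lintegral_mono hpt
    _ = (∫⁻ y, A y) + 2 * (∫⁻ y, B y) + 2 * (∫⁻ y, C y) + 2 * (∫⁻ y, D y) + 2 * (∫⁻ y, E y) := by
        rw [lintegral_add_left (((mA.fun_add (mB.const_mul 2)).fun_add (mC.const_mul 2)).fun_add
          (mD.const_mul 2)), lintegral_add_left ((mA.fun_add (mB.const_mul 2)).fun_add (mC.const_mul 2)),
          lintegral_add_left (mA.fun_add (mB.const_mul 2)), lintegral_add_left mA,
          lintegral_const_mul 2 mB, lintegral_const_mul 2 mC, lintegral_const_mul 2 mD,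
          lintegral_const_mul 2 mE]
    _ ≤ (S*S) + 2 * (S*S) + 2 * (S*S) + 2 * (S*S) + 2 * (S*S) := by
        gcongr
        · exact lint_pair cf cf n0 n0
        · exact lint_pair cf cf2 n0 n2
        · exact lint_pair cf cf1 n0 n1
        · exact lint_pair cf2 cf1 n2 n1
        · exact lint_pair cf cf21 n0 n21
    _ = 9 * (S * S) := by ring

lemma lint_Bprod {g h : Pt2 → ℝ} (hg : ContDiff ℝ (⊤ : ℕ∞) g) (hh : ContDiff ℝ (⊤ : ℕ∞) h) {S : ℝ≥0∞}
    (n0 : eLpNorm g 2 volume ≤ S) (n0' : eLpNorm h 2 volume ≤ S)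
    (n1 : eLpNorm (dd 0 g) 2 volume ≤ S) (n2 : eLpNorm (dd 1 g) 2 volume ≤ S)
    (n1' : eLpNorm (dd 0 h) 2 volume ≤ S) (n2' : eLpNorm (dd 1 h) 2 volume ≤ S) :
    ∫⁻ y, ENNReal.ofReal (Bprod g h y) ≤ 6 * (S * S) := by
  have cg := hg.continuous; have ch := hh.continuous
  have cg0 := (contDiff_dd hg 0).continuous; have cg1 := (contDiff_dd hg 1).continuous
  have ch0 := (contDiff_dd hh 0).continuous; have ch1 := (contDiff_dd hh 1).continuous
  set A : Pt2 → ℝ≥0∞ := fun y => ENNReal.ofReal (|g y| * |h y|) with hA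
  set B : Pt2 → ℝ≥0∞ := fun y => ENNReal.ofReal (|dd 0 g y| * |h y|) with hB
  set C : Pt2 → ℝ≥0∞ := fun y => ENNReal.ofReal (|dd 1 g y| * |h y|) with hC
  set D : Pt2 → ℝ≥0∞ := fun y => ENNReal.ofReal (|g y| * |dd 0 h y|) with hD
  set E : Pt2 → ℝ≥0∞ := fun y => ENNReal.ofReal (|g y| * |dd 1 h y|) with hE
  have mOf : ∀ (u v : Pt2 → ℝ), Continuous u → Continuous v →
      Measurable (fun y => ENNReal.ofReal (|u y| * |v y|)) := by
    intro u v hu hv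
    exact ((hu.abs.mul hv.abs).measurable).ennreal_ofReal
  have mA := mOf _ _ cg ch; have mB := mOf _ _ cg0 ch; have mC := mOf _ _ cg1 ch
  have mD := mOf _ _ cg ch0; have mE := mOf _ _ cg ch1
  have hpt : ∀ y, ENNReal.ofReal (Bprod g h y) ≤ 2 * A y + (B y + C y) + (D y + E y) := by
    intro y
    show ENNReal.ofReal (2 * |g y * h y| + (|dd 0 g y| + |dd 1 g y|) * |h y|
      + |g y| * (|dd 0 h y| + |dd 1 h y|)) ≤ _
    rw [abs_mul, add_mul, mul_add]
    calc ENNReal.ofReal (2 * (|g y| * |h y|) + (|dd 0 g y| * |h y| + |dd 1 g y| * |h y|)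
          + (|g y| * |dd 0 h y| + |g y| * |dd 1 h y|))
        ≤ ENNReal.ofReal (2 * (|g y| * |h y|) + (|dd 0 g y| * |h y| + |dd 1 g y| * |h y|))
          + ENNReal.ofReal (|g y| * |dd 0 h y| + |g y| * |dd 1 h y|) := ENNReal.ofReal_add_le
      _ ≤ (ENNReal.ofReal (2 * (|g y| * |h y|))
          + ENNReal.ofReal (|dd 0 g y| * |h y| + |dd 1 g y| * |h y|))
          + ENNReal.ofReal (|g y| * |dd 0 h y| + |g y| * |dd 1 h y|) := by
          gcongr; exact ENNReal.ofReal_add_le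
      _ ≤ (ENNReal.ofReal (2 * (|g y| * |h y|)) + (B y + C y)) + (D y + E y) := by
          gcongr <;> exact ENNReal.ofReal_add_le
      _ = 2 * A y + (B y + C y) + (D y + E y) := by rw [h2t]
  calc ∫⁻ y, ENNReal.ofReal (Bprod g h y)
      ≤ ∫⁻ y, (2 * A y + (B y + C y) + (D y + E y)) := lintegral_mono hpt
    _ = 2 * (∫⁻ y, A y) + ((∫⁻ y, B y) + ∫⁻ y, C y) + ((∫⁻ y, D y) + ∫⁻ y, E y) := by
        rw [lintegral_add_left ((mA.const_mul 2).fun_add (mB.fun_add mC)),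
          lintegral_add_left (mA.const_mul 2), lintegral_add_left mB, lintegral_add_left mD,
          lintegral_const_mul 2 mA]
    _ ≤ 2 * (S*S) + ((S*S) + (S*S)) + ((S*S) + (S*S)) := by
        gcongr
        · exact lint_pair cg ch n0 n0'
        · exact lint_pair cg0 ch n1 n0'
        · exact lint_pair cg1 ch n2 n0'
        · exact lint_pair cg ch0 n0 n1'
        · exact lint_pair cg ch1 n0 n2'
    _ = 6 * (S * S) := by ring

lemma lint_Hp {f : Pt2 → ℝ} (hf : ContDiff ℝ (⊤ : ℕ∞) f) {S : ℝ≥0∞}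
    (n0 : eLpNorm f 2 volume ≤ S)
    (n1 : eLpNorm (dd 0 f) 2 volume ≤ S) (n2 : eLpNorm (dd 1 f) 2 volume ≤ S)
    (nw : eLpNorm (omg f) 2 volume ≤ S)
    (nw0 : eLpNorm (dd 0 (omg f)) 2 volume ≤ S) (nw1 : eLpNorm (dd 1 (omg f)) 2 volume ≤ S) :
    ∫⁻ y, ENNReal.ofReal (Hp f y) ≤ 18 * (S * S) := by
  have hw := contDiff_omg hf
  have mB1 : Measurable (fun y => ENNReal.ofReal (Bprod f f y)) := by
    have : Continuous (Bprod f f) := by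
      unfold Bprod
      exact ((continuous_const.mul (hf.continuous.mul hf.continuous).abs).add
        (((contDiff_dd hf 0).continuous.abs.add (contDiff_dd hf 1).continuous.abs).mul
          hf.continuous.abs)).add (hf.continuous.abs.mul
          ((contDiff_dd hf 0).continuous.abs.add (contDiff_dd hf 1).continuous.abs))
    exact this.measurable.ennreal_ofReal
  have hpt : ∀ y, ENNReal.ofReal (Hp f y) ≤
      ENNReal.ofReal (Bprod f f y) + 2 * ENNReal.ofReal (Bprod f (omg f) y) := by
    intro y
    show ENNReal.ofReal (Bprod f f y + 2 * Bprod f (omg f) y) ≤ _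
    refine ENNReal.ofReal_add_le.trans ?_
    rw [h2t]
  calc ∫⁻ y, ENNReal.ofReal (Hp f y)
      ≤ ∫⁻ y, (ENNReal.ofReal (Bprod f f y) + 2 * ENNReal.ofReal (Bprod f (omg f) y)) :=
        lintegral_mono hpt
    _ = (∫⁻ y, ENNReal.ofReal (Bprod f f y)) + 2 * ∫⁻ y, ENNReal.ofReal (Bprod f (omg f) y) := by
        rw [lintegral_add_left mB1, lintegral_const_mul' 2 _ (by norm_num)]
    _ ≤ 6 * (S*S) + 2 * (6 * (S*S)) := by
        gcongr
        · exact lint_Bprod hf hf n0 n0 n1 n2 n1 n2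
        · exact lint_Bprod hf hw n0 nw n1 n2 nw0 nw1
    _ = 18 * (S * S) := by ring


end AuxWS24

/-- Lemma 2.1, inequality (2.4): weighted Sobolev estimate
  ⟨r⟩^{1/2} |φ(t,x)| ≲ Σ_{|α| ≤ 2} ‖Γ^α φ(t)‖_{L²}. -/
theorem weighted_sobolev_24 :
    ∃ C : ℝ, 0 < C ∧ ∀ (T : ℝ) (φ : ℝ → Pt2 → ℝ),
      ContDiff ℝ (⊤ : ℕ∞) (fun p : ℝ × Pt2 => φ p.1 p.2) →
      ∀ t ∈ Set.Icc (0:ℝ) T, ∀ x : Pt2,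
        ENNReal.ofReal (Real.sqrt (jb ‖x‖) * |φ t x|) ≤
          ENNReal.ofReal C * ∑ k ∈ Finset.range 3, ∑ α : Fin k → VF,
            eLpNorm (fun y => GammaW α φ t y) 2 volume := by
  refine ⟨6, by norm_num, ?_⟩
  intro T φ hφ t ht x
  set f : Pt2 → ℝ := fun y => φ t y with hfdef
  have hf : ContDiff ℝ (⊤ : ℕ∞) f := hφ.comp ((contDiff_const (c := t)).prodMk contDiff_id)
  set S := ∑ k ∈ Finset.range 3, ∑ α : Fin k → VF,
    eLpNorm (fun y => GammaW α φ t y) 2 volume with hS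
  have hmem : ∀ (k : ℕ), k < 3 → ∀ (α : Fin k → VF),
      eLpNorm (fun y => GammaW α φ t y) 2 volume ≤ S := by
    intro k hk α
    calc eLpNorm (fun y => GammaW α φ t y) 2 volume
        ≤ ∑ α' : Fin k → VF, eLpNorm (fun y => GammaW α' φ t y) 2 volume :=
          Finset.single_le_sum (f := fun α' : Fin k → VF =>
            eLpNorm (fun y => GammaW α' φ t y) 2 volume) (fun _ _ => zero_le)
            (Finset.mem_univ α)
      _ ≤ S := by
          rw [hS]
          exact Finset.single_le_sum (f := fun k => ∑ α' : Fin k → VF,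
            eLpNorm (fun y => GammaW α' φ t y) 2 volume) (fun _ _ => zero_le)
            (Finset.mem_range.mpr hk)
  have n0 : eLpNorm f 2 volume ≤ S := hmem 0 (by norm_num) ![]
  have n1 : eLpNorm (dd 0 f) 2 volume ≤ S := hmem 1 (by norm_num) ![VF.x1]
  have n2 : eLpNorm (dd 1 f) 2 volume ≤ S := hmem 1 (by norm_num) ![VF.x2]
  have nw : eLpNorm (omg f) 2 volume ≤ S := hmem 1 (by norm_num) ![VF.om]
  have n21 : eLpNorm (dd 1 (dd 0 f)) 2 volume ≤ S := hmem 2 (by norm_num) ![VF.x2, VF.x1]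
  have nw0 : eLpNorm (dd 0 (omg f)) 2 volume ≤ S := hmem 2 (by norm_num) ![VF.x1, VF.om]
  have nw1 : eLpNorm (dd 1 (omg f)) 2 volume ≤ S := hmem 2 (by norm_num) ![VF.x2, VF.om]
  have h1 : ENNReal.ofReal (f x ^ 2) ≤ 9 * (S*S) :=
    (cart_bound hf x).trans (lint_Hc hf n0 n1 n2 n21)
  have h2 : ENNReal.ofReal (‖x‖ * f x ^ 2) ≤ 18 * (S*S) := by
    rcases le_or_gt 1 ‖x‖ with hx | hx
    · exact (polar_bound hf x hx).trans (lint_Hp hf n0 n1 n2 nw nw0 nw1)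
    · calc ENNReal.ofReal (‖x‖ * f x ^ 2) ≤ ENNReal.ofReal (f x ^ 2) := by
            apply ENNReal.ofReal_le_ofReal
            exact mul_le_of_le_one_left (pow_two_nonneg _) hx.le
        _ ≤ 9 * (S*S) := h1
        _ ≤ 18 * (S*S) := mul_le_mul_left (by norm_num) _
  have main : ENNReal.ofReal (jb ‖x‖ * f x ^ 2) ≤ 36 * (S * S) := by
    have hjb : jb ‖x‖ ≤ 1 + ‖x‖ := by
      rw [jb]
      calc Real.sqrt (1 + ‖x‖^2) ≤ Real.sqrt ((1 + ‖x‖)^2) :=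
            Real.sqrt_le_sqrt (by nlinarith [norm_nonneg x])
        _ = 1 + ‖x‖ := Real.sqrt_sq (by positivity)
    calc ENNReal.ofReal (jb ‖x‖ * f x ^ 2)
        ≤ ENNReal.ofReal ((1 + ‖x‖) * f x ^ 2) := ENNReal.ofReal_le_ofReal
          (mul_le_mul_of_nonneg_right hjb (pow_two_nonneg _))
      _ = ENNReal.ofReal (f x ^ 2 + ‖x‖ * f x ^ 2) := by rw [add_mul, one_mul]
      _ ≤ ENNReal.ofReal (f x ^ 2) + ENNReal.ofReal (‖x‖ * f x ^ 2) := ENNReal.ofReal_add_le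
      _ ≤ 9 * (S*S) + 18 * (S*S) := add_le_add h1 h2
      _ = 27 * (S * S) := by ring
      _ ≤ 36 * (S * S) := mul_le_mul_left (by norm_num) _
  show ENNReal.ofReal (Real.sqrt (jb ‖x‖) * |φ t x|) ≤ ENNReal.ofReal 6 * S
  by_contra hcon
  push_neg at hcon
  have hsq : (ENNReal.ofReal 6 * S)^2 < (ENNReal.ofReal (Real.sqrt (jb ‖x‖) * |φ t x|))^2 :=
    ENNReal.pow_lt_pow_left (by norm_num) hcon
  have hL : (ENNReal.ofReal (Real.sqrt (jb ‖x‖) * |φ t x|))^2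
      = ENNReal.ofReal (jb ‖x‖ * f x ^ 2) := by
    rw [← ENNReal.ofReal_pow (by positivity)]
    congr 1
    rw [mul_pow, Real.sq_sqrt (show (0:ℝ) ≤ jb ‖x‖ from Real.sqrt_nonneg _), sq_abs]
  have hR : (ENNReal.ofReal 6 * S)^2 = 36 * (S * S) := by
    rw [mul_pow, ← ENNReal.ofReal_pow (by norm_num : (0:ℝ) ≤ 6)]
    norm_num [pow_two]
  rw [hL, hR] at hsq
  exact lt_irrefl _ (lt_of_lt_of_le hsq main)


end Paper
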